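/- Let n ≥ 2 and let T ∈ M_n(k') be an invertible diagonal matrix (hence hermitian with diagonal entries in k). Then: (a) g(x, (1,0)ᵗ) = f_{T,n}(x) for every x ∈ 𝔛_T; (b) if g̃ ∈ U(H_n) has, with respect to the block decomposition with row/column sizes (n−1, 1, n−1, 1), the form g̃ = [[p, *, *, *],[0, a, λ, b],[0, 0, p^{*−1}, 0],[0, c, μ, d]], where p ∈ GL_{n−1}(k'), λ, μ ∈ M_{1,n−1}(k'), the entries * are arbitrary, and h := [[a,b],[c,d]] satisfies h*·[[0,1],[1,0]]·h = [[0,1],[1,0]], then for every x ∈ 𝔛_T, v ∈ M_{2,1}(k'), and r ∈ k'^×: g(g̃·x, h·v·r^{−1}) = N(det p)^{−1} · N(r)^{−1} · g(x, v). -/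

import Mathlib

/-!
Both parts rest on the shape of `M(x, v)`. For `v = (1, 0)` it is `x₂`, and `d_n` is the
determinant. For `g̃` in the parabolic subgroup, the rows of `g̃ x` are combinations of the rows of
`x` read off from the block form of `g̃`, and one finds `M(g̃ x, h v r⁻¹) = Q · M(x, v)` with `Q`
block lower triangular with diagonal blocks `p*⁻¹` and `r⁻¹ det h`. Hence `g` is multiplied by
`N(det Q) = N(det p)⁻¹ N(r)⁻¹ N(det h)`, and `N(det h) = 1` because `h` preserves `H₁`,
whose determinant is `-1`.
-/

open Matrix MeasureTheory
open scoped BigOperators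
noncomputable section
open Classical

/-- Conjugate transpose of a matrix with respect to an involution `conj` of the field. -/
def ctr {k' : Type} [Field k'] (conj : k' ≃+* k') {m l : Type} (A : Matrix m l k') :
    Matrix l m k' := fun i j => conj (A j i)

/-- The split hermitian form `H_n = [[0,1_n],[1_n,0]]`. -/
def Hmat (k' : Type) [Field k'] (n : ℕ) : Matrix (Fin n ⊕ Fin n) (Fin n ⊕ Fin n) k' :=
  Matrix.fromBlocks 0 1 1 0

/-- The hermitian form `H_1 = [[0,1],[1,0]]`. -/
def H1 (k' : Type) [Field k'] : Matrix (Fin 2) (Fin 2) k' := !![0, 1; 1, 0]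

/-- The lower `n × n` block of a `2n × n` matrix. -/
def lowerBlock {k' : Type} [Field k'] {n : ℕ} (x : Matrix (Fin n ⊕ Fin n) (Fin n) k') :
    Matrix (Fin n) (Fin n) k' := fun i j => x (Sum.inr i) j

/-- `d_i(y)` : determinant of the upper left `i × i` block of `y`. -/
def dmin {k' : Type} [Field k'] {n : ℕ} (i : ℕ) (hi : i ≤ n)
    (y : Matrix (Fin n) (Fin n) k') : k' :=
  (y.submatrix (Fin.castLE hi) (Fin.castLE hi)).det

/-- The relative invariant `f_{T,i}(x) = d_i(x₂ T⁻¹ x₂*)`. -/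
def fTi {k' : Type} [Field k'] (conj : k' ≃+* k') {n : ℕ}
    (T : Matrix (Fin n) (Fin n) k') (x : Matrix (Fin n ⊕ Fin n) (Fin n) k')
    (i : ℕ) (hi : i ≤ n) : k' :=
  dmin i hi (lowerBlock x * T⁻¹ * ctr conj (lowerBlock x))

/-- The matrix `M(x,v)` : first `n−1` rows those of `x₂`, last row
`v_1·(last row of x₂) − v_2·(last row of the upper block of x)`. -/
def Mxv {k' : Type} [Field k'] {n : ℕ} (x : Matrix (Fin n ⊕ Fin n) (Fin n) k')
    (v : Fin 2 → k') : Matrix (Fin n) (Fin n) k' :=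
  fun i j =>
    if (i : ℕ) = n - 1 then v 0 * x (Sum.inr i) j - v 1 * x (Sum.inl i) j
    else x (Sum.inr i) j

/-- `g(x,v) = det(M(x,v) T⁻¹ M(x,v)*)`. -/
def gxv {k' : Type} [Field k'] (conj : k' ≃+* k') {n : ℕ}
    (T : Matrix (Fin n) (Fin n) k') (x : Matrix (Fin n ⊕ Fin n) (Fin n) k')
    (v : Fin 2 → k') : k' :=
  (Mxv x v * T⁻¹ * ctr conj (Mxv x v)).det

section Conjugation
variable {k' : Type} [Field k'] (conj : k' ≃+* k')

lemma ctr_mul {m l o : Type} [Fintype l] (A : Matrix m l k') (B : Matrix l o k') :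
    ctr conj (A * B) = ctr conj B * ctr conj A := by
  ext i j
  simp only [ctr, Matrix.mul_apply, map_sum, map_mul]
  exact Finset.sum_congr rfl fun _ _ => mul_comm _ _

lemma det_ctr {m : Type} [Fintype m] [DecidableEq m] (A : Matrix m m k') :
    (ctr conj A).det = conj A.det :=
  (det_transpose _).trans (RingHom.map_det (conj : k' →+* k') A).symm

lemma det_mul_mul_ctr {m : Type} [Fintype m] [DecidableEq m] (Q A : Matrix m m k') :
    (Q * A * ctr conj Q).det = Q.det * A.det * conj Q.det := by
  rw [det_mul, det_mul, det_ctr]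

lemma det_mul_conj_det_eq_one_of_ctr_mul_H1_mul {h : Matrix (Fin 2) (Fin 2) k'}
    (hh : ctr conj h * H1 k' * h = H1 k') : h.det * conj h.det = 1 := by
  have hdet := congrArg det hh
  have hH1 : (H1 k').det = -1 := by simp [H1, det_fin_two_of]
  rw [det_mul, det_mul, det_ctr, hH1] at hdet
  linear_combination -hdet

end Conjugation

section LastIndex
variable {R : Type} [CommRing R] {n : ℕ} (hn : 1 ≤ n)

def finSplitLast : Fin (n - 1) ⊕ Fin 1 ≃ Fin n :=
  finSumFinEquiv.trans (finCongr (by omega))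

@[simp]
lemma finSplitLast_inl (i : Fin (n - 1)) :
    finSplitLast hn (.inl i) = Fin.castLE (Nat.sub_le n 1) i := by
  ext; simp [finSplitLast]

@[simp]
lemma finSplitLast_inr (i : Fin 1) : finSplitLast hn (.inr i) = ⟨n - 1, by omega⟩ := by
  ext; simp [finSplitLast, Fin.fin_one_eq_zero i]

@[simp]
lemma finSplitLast_symm_castLE (i : Fin (n - 1)) :
    (finSplitLast hn).symm (Fin.castLE (Nat.sub_le n 1) i) = .inl i := by
  rw [Equiv.symm_apply_eq, finSplitLast_inl]

@[simp]
lemma finSplitLast_symm_last : (finSplitLast hn).symm ⟨n - 1, by omega⟩ = .inr 0 := by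
  rw [Equiv.symm_apply_eq, finSplitLast_inr]

lemma sum_eq_sum_castLE_add_last {M : Type} [AddCommMonoid M] (f : Fin n → M) :
    ∑ j, f j = ∑ j : Fin (n - 1), f (Fin.castLE (Nat.sub_le n 1) j) + f ⟨n - 1, by omega⟩ := by
  rw [← (finSplitLast hn).sum_comp, Fintype.sum_sum_type, Fin.sum_univ_one]
  simp

def blockLowerLast (A : Matrix (Fin (n - 1)) (Fin (n - 1)) R) (C : Fin (n - 1) → R) (D : R) :
    Matrix (Fin n) (Fin n) R :=
  reindex (finSplitLast hn) (finSplitLast hn)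
    (fromBlocks A 0 (replicateRow (Fin 1) C) (of fun _ _ => D))

lemma det_blockLowerLast (A : Matrix (Fin (n - 1)) (Fin (n - 1)) R) (C : Fin (n - 1) → R)
    (D : R) : (blockLowerLast hn A C D).det = A.det * D := by
  rw [blockLowerLast, det_reindex_self, det_fromBlocks_zero₁₂, det_fin_one, of_apply]

lemma blockLowerLast_mul_castLE (A : Matrix (Fin (n - 1)) (Fin (n - 1)) R) (C : Fin (n - 1) → R)
    (D : R) (M : Matrix (Fin n) (Fin n) R) (i : Fin (n - 1)) :
    (blockLowerLast hn A C D * M) (Fin.castLE (Nat.sub_le n 1) i) =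
      ∑ l, A i l • M (Fin.castLE (Nat.sub_le n 1) l) := by
  rw [mul_apply_eq_vecMul, vecMul_eq_sum, ← (finSplitLast hn).sum_comp]
  simp [blockLowerLast, Fintype.sum_sum_type]

lemma blockLowerLast_mul_last (A : Matrix (Fin (n - 1)) (Fin (n - 1)) R) (C : Fin (n - 1) → R)
    (D : R) (M : Matrix (Fin n) (Fin n) R) :
    (blockLowerLast hn A C D * M) ⟨n - 1, by omega⟩ =
      ∑ l, C l • M (Fin.castLE (Nat.sub_le n 1) l) + D • M ⟨n - 1, by omega⟩ := by
  rw [mul_apply_eq_vecMul, vecMul_eq_sum, ← (finSplitLast hn).sum_comp]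
  simp [blockLowerLast, Fintype.sum_sum_type]

lemma mul_row_eq_sum_split {m : Type} (G : Matrix m (Fin n ⊕ Fin n) R)
    (x : Matrix (Fin n ⊕ Fin n) (Fin n) R) (r : m) :
    (G * x) r =
      ∑ l, G r (.inl (Fin.castLE (Nat.sub_le n 1) l)) • x (.inl (Fin.castLE (Nat.sub_le n 1) l))
        + G r (.inl ⟨n - 1, by omega⟩) • x (.inl ⟨n - 1, by omega⟩)
      + (∑ l, G r (.inr (Fin.castLE (Nat.sub_le n 1) l)) • x (.inr (Fin.castLE (Nat.sub_le n 1) l))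
        + G r (.inr ⟨n - 1, by omega⟩) • x (.inr ⟨n - 1, by omega⟩)) := by
  rw [mul_apply_eq_vecMul, vecMul_eq_sum, Fintype.sum_sum_type, sum_eq_sum_castLE_add_last hn,
    sum_eq_sum_castLE_add_last hn]

end LastIndex

section Mxv
variable {k' : Type} [Field k'] (conj : k' ≃+* k') {n : ℕ} (hn : 1 ≤ n)

lemma Mxv_castLE (x : Matrix (Fin n ⊕ Fin n) (Fin n) k') (v : Fin 2 → k') (i : Fin (n - 1)) :
    Mxv x v (Fin.castLE (Nat.sub_le n 1) i) = x (.inr (Fin.castLE (Nat.sub_le n 1) i)) := by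
  ext j
  exact if_neg (by have := i.isLt; simp only [Fin.val_castLE]; omega)

lemma Mxv_last (x : Matrix (Fin n ⊕ Fin n) (Fin n) k') (v : Fin 2 → k') :
    Mxv x v ⟨n - 1, by omega⟩ =
      v 0 • x (.inr ⟨n - 1, by omega⟩) - v 1 • x (.inl ⟨n - 1, by omega⟩) := by
  ext j
  exact if_pos rfl

lemma gxv_eq_of_Mxv_eq_mul (T : Matrix (Fin n) (Fin n) k')
    {x y : Matrix (Fin n ⊕ Fin n) (Fin n) k'} {v w : Fin 2 → k'} (Q : Matrix (Fin n) (Fin n) k')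
    (hM : Mxv y w = Q * Mxv x v) :
    gxv conj T y w = Q.det * gxv conj T x v * conj Q.det := by
  rw [gxv, gxv, hM, ctr_mul, ← det_mul_mul_ctr]
  simp only [Matrix.mul_assoc]

lemma gxv_one_zero_eq_fTi (T : Matrix (Fin n) (Fin n) k')
    (x : Matrix (Fin n ⊕ Fin n) (Fin n) k') :
    gxv conj T x ![1, 0] = fTi conj T x n le_rfl := by
  have hM : Mxv x ![1, 0] = lowerBlock x := by
    ext i j
    by_cases hi : (i : ℕ) = n - 1 <;> simp [Mxv, lowerBlock, hi]
  rw [gxv, hM]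
  rfl

lemma Mxv_mul_eq_blockLowerLast_mul (P : Matrix (Fin (n - 1)) (Fin (n - 1)) k')
    (lamv muv : Fin (n - 1) → k') (a b c d : k')
    (G : Matrix (Fin n ⊕ Fin n) (Fin n ⊕ Fin n) k')
    (hg2 : ∀ j : Fin (n - 1),
      G (Sum.inl ⟨n - 1, by omega⟩) (Sum.inl (Fin.castLE (Nat.sub_le n 1) j)) = 0)
    (hg3 : G (Sum.inl ⟨n - 1, by omega⟩) (Sum.inl ⟨n - 1, by omega⟩) = a)
    (hg4 : ∀ j : Fin (n - 1),
      G (Sum.inl ⟨n - 1, by omega⟩) (Sum.inr (Fin.castLE (Nat.sub_le n 1) j)) = lamv j)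
    (hg5 : G (Sum.inl ⟨n - 1, by omega⟩) (Sum.inr ⟨n - 1, by omega⟩) = b)
    (hg6 : ∀ (i : Fin (n - 1)) (j : Fin n),
      G (Sum.inr (Fin.castLE (Nat.sub_le n 1) i)) (Sum.inl j) = 0)
    (hg7 : ∀ i j : Fin (n - 1),
      G (Sum.inr (Fin.castLE (Nat.sub_le n 1) i)) (Sum.inr (Fin.castLE (Nat.sub_le n 1) j)) =
        P i j)
    (hg8 : ∀ i : Fin (n - 1),
      G (Sum.inr (Fin.castLE (Nat.sub_le n 1) i)) (Sum.inr ⟨n - 1, by omega⟩) = 0)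
    (hg9 : ∀ j : Fin (n - 1),
      G (Sum.inr ⟨n - 1, by omega⟩) (Sum.inl (Fin.castLE (Nat.sub_le n 1) j)) = 0)
    (hg10 : G (Sum.inr ⟨n - 1, by omega⟩) (Sum.inl ⟨n - 1, by omega⟩) = c)
    (hg11 : ∀ j : Fin (n - 1),
      G (Sum.inr ⟨n - 1, by omega⟩) (Sum.inr (Fin.castLE (Nat.sub_le n 1) j)) = muv j)
    (hg12 : G (Sum.inr ⟨n - 1, by omega⟩) (Sum.inr ⟨n - 1, by omega⟩) = d)
    (x : Matrix (Fin n ⊕ Fin n) (Fin n) k') {v w : Fin 2 → k'} {D : k'}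
    -- `hwd` and `hwa` say that `adj h *ᵥ w = D • v`, where `h = !![a, b; c, d]`.
    (hwd : w 0 * d - w 1 * b = D * v 0) (hwa : w 1 * a - w 0 * c = D * v 1) :
    Mxv (G * x) w = blockLowerLast hn P (fun l => w 0 * muv l - w 1 * lamv l) D * Mxv x v := by
  funext i
  obtain ⟨i | i, rfl⟩ := (finSplitLast hn).surjective i
  · rw [finSplitLast_inl, Mxv_castLE, blockLowerLast_mul_castLE, mul_row_eq_sum_split hn]
    simp only [hg6, hg7, hg8, Mxv_castLE, zero_smul, Finset.sum_const_zero, zero_add, add_zero]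
  · rw [finSplitLast_inr, Mxv_last hn, blockLowerLast_mul_last, mul_row_eq_sum_split hn,
      mul_row_eq_sum_split hn, Mxv_last hn]
    simp only [hg2, hg3, hg4, hg5, hg9, hg10, hg11, hg12, Mxv_castLE, zero_smul,
      Finset.sum_const_zero, zero_add, sub_smul, mul_smul, Finset.sum_sub_distrib,
      ← Finset.smul_sum]
    linear_combination (norm := module)
      hwd • x (.inr ⟨n - 1, by omega⟩) - hwa • x (.inl ⟨n - 1, by omega⟩)

end Mxv

/-- `g(x,(1,0)ᵗ) = f_«T,n»(x)`, and `g` is a relative invariant for the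
parabolic subgroup `P_τ` and the extra `GL_1`-action. -/
theorem stmt7
    {k' : Type} [Field k']
    (conj : k' ≃+* k') (hinvol : ∀ a, conj (conj a) = a)
    (n : ℕ) (hn : 2 ≤ n)
    (T : Matrix (Fin n) (Fin n) k')
    (p : Matrix (Fin (n - 1)) (Fin (n - 1)) k')
    (lamv muv : Fin (n - 1) → k') (a b c d : k')
    (gt : Matrix (Fin n ⊕ Fin n) (Fin n ⊕ Fin n) k')
    (hg2 : ∀ j : Fin (n - 1),
      gt (Sum.inl ⟨n - 1, by omega⟩) (Sum.inl (Fin.castLE (Nat.sub_le n 1) j)) = 0)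
    (hg3 : gt (Sum.inl ⟨n - 1, by omega⟩) (Sum.inl ⟨n - 1, by omega⟩) = a)
    (hg4 : ∀ j : Fin (n - 1),
      gt (Sum.inl ⟨n - 1, by omega⟩) (Sum.inr (Fin.castLE (Nat.sub_le n 1) j)) = lamv j)
    (hg5 : gt (Sum.inl ⟨n - 1, by omega⟩) (Sum.inr ⟨n - 1, by omega⟩) = b)
    (hg6 : ∀ (i : Fin (n - 1)) (j : Fin n),
      gt (Sum.inr (Fin.castLE (Nat.sub_le n 1) i)) (Sum.inl j) = 0)
    (hg7 : ∀ i j : Fin (n - 1),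
      gt (Sum.inr (Fin.castLE (Nat.sub_le n 1) i)) (Sum.inr (Fin.castLE (Nat.sub_le n 1) j)) =
        (ctr conj p)⁻¹ i j)
    (hg8 : ∀ i : Fin (n - 1),
      gt (Sum.inr (Fin.castLE (Nat.sub_le n 1) i)) (Sum.inr ⟨n - 1, by omega⟩) = 0)
    (hg9 : ∀ j : Fin (n - 1),
      gt (Sum.inr ⟨n - 1, by omega⟩) (Sum.inl (Fin.castLE (Nat.sub_le n 1) j)) = 0)
    (hg10 : gt (Sum.inr ⟨n - 1, by omega⟩) (Sum.inl ⟨n - 1, by omega⟩) = c)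
    (hg11 : ∀ j : Fin (n - 1),
      gt (Sum.inr ⟨n - 1, by omega⟩) (Sum.inr (Fin.castLE (Nat.sub_le n 1) j)) = muv j)
    (hg12 : gt (Sum.inr ⟨n - 1, by omega⟩) (Sum.inr ⟨n - 1, by omega⟩) = d)
    (hh : ctr conj !![a, b; c, d] * H1 k' * !![a, b; c, d] = H1 k') :
    (∀ x : Matrix (Fin n ⊕ Fin n) (Fin n) k', ctr conj x * Hmat k' n * x = T →
      gxv conj T x ![1, 0] = fTi conj T x n le_rfl) ∧
    (∀ (x : Matrix (Fin n ⊕ Fin n) (Fin n) k'), ctr conj x * Hmat k' n * x = T →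
      ∀ (vv : Fin 2 → k') (r : k'), r ≠ 0 →
        gxv conj T (gt * x) (fun i => (!![a, b; c, d]).mulVec vv i * r⁻¹) =
          (p.det * conj p.det)⁻¹ * (r * conj r)⁻¹ * gxv conj T x vv) := by
  refine ⟨fun x _ => gxv_one_zero_eq_fTi conj T x, fun x _ vv r _ => ?_⟩
  have hdet : (a * d - b * c) * conj (a * d - b * c) = 1 := by
    simpa [det_fin_two_of] using det_mul_conj_det_eq_one_of_ctr_mul_H1_mul conj hh
  have hM := Mxv_mul_eq_blockLowerLast_mul (show 1 ≤ n by omega) _ lamv muv a b c d gt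
    hg2 hg3 hg4 hg5 hg6 hg7 hg8 hg9 hg10 hg11 hg12 x
    (w := fun i => (!![a, b; c, d]).mulVec vv i * r⁻¹) (D := r⁻¹ * (a * d - b * c))
    (by simp [mulVec, dotProduct]; ring) (by simp [mulVec, dotProduct]; ring)
  rw [gxv_eq_of_Mxv_eq_mul conj T _ hM, det_blockLowerLast, det_nonsing_inv, Ring.inverse_eq_inv',
    det_ctr]
  simp only [map_mul, map_inv₀, hinvol]
  linear_combination ((conj p.det)⁻¹ * p.det⁻¹ * r⁻¹ * (conj r)⁻¹ * gxv conj T x vv) * hdet
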